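/- (Chen's relation) Let x : [0,1] → ℝ^d be a Lipschitz path and 0 ≤ s ≤ t ≤ u ≤ 1. Then for every k ≥ 1 and all indices i₁,…,i_k ∈ {1,…,d}: g^{k,i₁,…,i_k}_{s,u} = Σ_{j=0}^{k} g^{j,i₁,…,i_j}_{s,t} · g^{k−j,i_{j+1},…,i_k}_{t,u}, where by convention a level-0 iterated integral equals 1. Equivalently, S_N(x)_{s,t} ⊗ S_N(x)_{t,u} = S_N(x)_{s,u} in the truncated tensor algebra. -/

import Mathlib

/-!
Split the outer integral of `g^{i :: w}_{s,u} = ∫_s^u dx^i_r g^w_{r,u}` at `t`. The part over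
`[t,u]` is `g^{i :: w}_{t,u}`, the `j = 0` term of the convolution. On `[s,t]`, Chen's relation
for the shorter word `w` expands `g^w_{r,u}` through the point `t`, and integrating term by term
in `r` gives the remaining terms `g^{i :: w₁}_{s,t} g^{w₂}_{t,u}`. All these integrals exist
because each `g^w_{·,u}` is continuous and the coordinates of `x'` are locally integrable.
-/

open MeasureTheory Set

/-- Iterated integral `g^{k,i₁,…,i_k}_{s,t} = ∫_{s<r₁<⋯<r_k<t} dx^{i₁}⋯dx^{i_k}` of the
path with derivative `x'`, indexed by the word `[i₁,…,i_k]`. -/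
noncomputable def iterInt {d : ℕ} (x' : ℝ → EuclideanSpace ℝ (Fin d)) :
    List (Fin d) → ℝ → ℝ → ℝ
  | [], _, _ => 1
  | i :: w, s, t => ∫ r in s..t, x' r i * iterInt x' w r t

/-- `x` is a Lipschitz path on `[0,1]` with (a.e. defined, bounded measurable)
derivative `x'`, encoded via the fundamental theorem of calculus. -/
def IsLipPath {d : ℕ} (x x' : ℝ → EuclideanSpace ℝ (Fin d)) : Prop :=
  Measurable x' ∧ (∃ L : ℝ, ∀ r, ‖x' r‖ ≤ L) ∧
    ∀ t ∈ Set.Icc (0:ℝ) 1, x t = x 0 + ∫ r in (0:ℝ)..t, x' r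

open intervalIntegral

lemma IsLipPath.intervalIntegrable_coord {d : ℕ} {x x' : ℝ → EuclideanSpace ℝ (Fin d)}
    (hx : IsLipPath x x') (i : Fin d) (a b : ℝ) :
    IntervalIntegrable (fun r => x' r i) volume a b := by
  obtain ⟨hm, ⟨L, hL⟩, -⟩ := hx
  refine IntervalIntegrable.mono_fun' (g := fun _ => L) intervalIntegrable_const ?_ ?_
  · exact ((measurable_pi_apply i).comp
      ((WithLp.measurable_ofLp _ _).comp hm)).aestronglyMeasurable
  · exact Filter.Eventually.of_forall fun r => (PiLp.norm_apply_le (x' r) i).trans (hL r)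

section Chen

variable {d : ℕ} {x' : ℝ → EuclideanSpace ℝ (Fin d)}
  (hx' : ∀ i a b, IntervalIntegrable (fun r => x' r i) volume a b)
include hx'

lemma continuous_iterInt_left (w : List (Fin d)) (t : ℝ) :
    Continuous fun s => iterInt x' w s t := by
  induction w with
  | nil => exact continuous_const
  | cons i w ih =>
    have hint : ∀ a b, IntervalIntegrable (fun r => x' r i * iterInt x' w r t) volume a b :=
      fun a b => (hx' i a b).mul_continuousOn ih.continuousOn
    have hprim : (fun s => iterInt x' (i :: w) s t)
        = fun s => -∫ r in t..s, x' r i * iterInt x' w r t := by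
      funext s
      rw [iterInt, integral_symm]
    rw [hprim]
    exact (continuous_primitive hint t).neg

lemma iterInt_eq_sum_take_mul_drop (w : List (Fin d)) (s t u : ℝ) :
    iterInt x' w s u =
      ∑ j ∈ Finset.range (w.length + 1),
        iterInt x' (w.take j) s t * iterInt x' (w.drop j) t u := by
  induction w generalizing s with
  | nil => simp [iterInt]
  | cons i w ih =>
    have hint : ∀ (w' : List (Fin d)) (v a b : ℝ),
        IntervalIntegrable (fun r => x' r i * iterInt x' w' r v) volume a b :=
      fun w' v a b => (hx' i a b).mul_continuousOn (continuous_iterInt_left hx' w' v).continuousOn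
    have hsplit : iterInt x' (i :: w) s u
        = (∫ r in s..t, x' r i * iterInt x' w r u) + iterInt x' (i :: w) t u := by
      rw [iterInt, iterInt, integral_add_adjacent_intervals (hint w u s t) (hint w u t u)]
    have hexpand : ∫ r in s..t, x' r i * iterInt x' w r u
        = ∑ j ∈ Finset.range (w.length + 1),
            iterInt x' (i :: w.take j) s t * iterInt x' (w.drop j) t u := calc
      _ = ∫ r in s..t, ∑ j ∈ Finset.range (w.length + 1),
            x' r i * iterInt x' (w.take j) r t * iterInt x' (w.drop j) t u := by
        refine integral_congr fun r _ => ?_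
        simp only [ih, Finset.mul_sum, mul_assoc]
      _ = _ := by
        rw [integral_finsetSum fun j _ => (hint _ t s t).mul_const _]
        simp only [intervalIntegral.integral_mul_const, iterInt]
    rw [hsplit, hexpand, List.length_cons, Finset.sum_range_succ' _ (w.length + 1)]
    simp [iterInt]

end Chen

theorem statement5_general {d : ℕ} (x x' : ℝ → EuclideanSpace ℝ (Fin d)) (hx : IsLipPath x x')
    (s t u : ℝ) :
    ∀ w : List (Fin d), 1 ≤ w.length →
      iterInt x' w s u =
        ∑ j ∈ Finset.range (w.length + 1),
          iterInt x' (w.take j) s t * iterInt x' (w.drop j) t u :=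
  fun w _ => iterInt_eq_sum_take_mul_drop hx.intervalIntegrable_coord w s t u

/-- (Chen's relation.) For a Lipschitz path `x` and `0 ≤ s ≤ t ≤ u ≤ 1`,
every iterated integral of `x` over `[s,u]` is the convolution of the iterated integrals
over `[s,t]` and `[t,u]`:
`g^{k,i₁,…,i_k}_{s,u} = Σ_{j=0}^k g^{j,i₁,…,i_j}_{s,t} · g^{k−j,i_{j+1},…,i_k}_{t,u}`,
a level-0 iterated integral being `1`; equivalently `S_N(x)_{s,t} ⊗ S_N(x)_{t,u} = S_N(x)_{s,u}`. -/
theorem statement5 {d : ℕ} (x x' : ℝ → EuclideanSpace ℝ (Fin d)) (hx : IsLipPath x x')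
    (s t u : ℝ) (hs : 0 ≤ s) (hst : s ≤ t) (htu : t ≤ u) (hu : u ≤ 1) :
    ∀ w : List (Fin d), 1 ≤ w.length →
      iterInt x' w s u =
        ∑ j ∈ Finset.range (w.length + 1),
          iterInt x' (w.take j) s t * iterInt x' (w.drop j) t u :=
  statement5_general x x' hx s t u
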